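/- Let H = H_{k_1,…,k_n} be a Hamming graph with root 0^n and let G = H_{0^n}({x}) be the daisy graph of H with respect to 0^n generated by a single vertex x = x_1…x_n. Then G is isomorphic to the daisy cube Q_n({y_1…y_n}), where y_i = min{x_i, 1} for each i ∈ {1,…,n}. -/

import Mathlib

open SimpleGraph

namespace Daisy

variable {V : Type*}

/-- The interval `I_G(u,v)`: vertices lying on shortest `u,v`-paths. -/
def interval (G : SimpleGraph V) (u v : V) : Set V :=
  {x | G.dist u x + G.dist x v = G.dist u v}

/-- The vertex set of the daisy graph of `G` with respect to the root `r`, generated by `X`. -/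
def daisySet (G : SimpleGraph V) (r : V) (X : Set V) : Set V :=
  ⋃ v ∈ X, interval G r v

/-- The subgraph of `G` induced by `S` is an isometric subgraph of `G`. -/
def IsIsometricSubset (G : SimpleGraph V) (S : Set V) : Prop :=
  ∀ u v : S, (G.induce S).dist u v = G.dist u.1 v.1

/-- Some shortest `u,v`-path of `G` contains both `x` and `y`. -/
def OnShortestPath (G : SimpleGraph V) (u v x y : V) : Prop :=
  ∃ p : G.Walk u v, p.length = G.dist u v ∧ x ∈ p.support ∧ y ∈ p.support

/-- Conditions 1 and 2 of the definition of a pseudo-median `(x,y,z)` of the triple `(u,v,w)`. -/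
def PseudoMedianConds (G : SimpleGraph V) (u v w x y z : V) : Prop :=
  OnShortestPath G u v x y ∧ OnShortestPath G v w y z ∧ OnShortestPath G u w x z ∧
  G.dist x y = G.dist y z ∧ G.dist y z = G.dist x z

/-- `(x,y,z)` is a pseudo-median of the triple `(u,v,w)` in `G`:
it satisfies the path and equidistance conditions, and `d(x,y)` is minimal under them. -/
def IsPseudoMedian (G : SimpleGraph V) (u v w x y z : V) : Prop :=
  PseudoMedianConds G u v w x y z ∧
  ∀ x' y' z' : V, PseudoMedianConds G u v w x' y' z' → G.dist x y ≤ G.dist x' y'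

/-- The triple `(u,v,w)` has a pseudo-median of size `s` in `G`. -/
def HasPseudoMedianOfSize (G : SimpleGraph V) (u v w : V) (s : ℕ) : Prop :=
  ∃ x y z : V, IsPseudoMedian G u v w x y z ∧ G.dist x y = s

/-- The Hamming graph with factors `K_{k i}`: vertices are tuples, two vertices being
adjacent iff they differ in exactly one coordinate. -/
def hammingGraph {ι : Type*} (k : ι → ℕ) : SimpleGraph (∀ i, Fin (k i)) where
  Adj u v := ∃! i, u i ≠ v i
  symm := by
    constructor
    rintro u v ⟨i, hi, hu⟩
    exact ⟨i, Ne.symm hi, fun j hj => hu j (Ne.symm hj)⟩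
  loopless := by
    constructor
    rintro u ⟨i, hi, -⟩
    exact hi rfl

/-- The all-zeros vertex `0^n` of a Hamming graph. -/
def hroot {ι : Type*} (k : ι → ℕ) (hk : ∀ i, 0 < k i) : ∀ i, Fin (k i) :=
  fun i => ⟨0, hk i⟩

/-!
In a Hamming graph the graph distance is the Hamming distance, so `z` lies in the interval
`I(r, x)` exactly when every coordinate of `z` agrees with `r` or with `x`. Such a `z` is thus
determined by the set of coordinates where it leaves `r`, and two such vertices differ in exactly
the coordinates where these choices differ. Hence `I(r, x)` depends up to isomorphism only on the
set of coordinates where `r` and `x` differ, and replacing every factor `K_{k i}` by `K_2`, `r` by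
`0^n` and `x` by `y` does not change that set.
-/

section Pair

variable {α β : Type*} [DecidableEq α] {a b r x : α} {r' x' : β}

lemma ite_ite_eq_of_eq_or_eq [DecidableEq β] (ha : a = r ∨ a = x) (h : r ≠ x ↔ r' ≠ x') :
    (if (if a = r then r' else x') = r' then r else x) = a := by
  split_ifs <;> grind

lemma ite_ne_ite_iff_of_eq_or_eq (ha : a = r ∨ a = x) (hb : b = r ∨ b = x)
    (h : r ≠ x ↔ r' ≠ x') :
    (if a = r then r' else x') ≠ (if b = r then r' else x') ↔ a ≠ b := by
  split_ifs <;> grind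

end Pair

lemma daisySet_singleton (G : SimpleGraph V) (r x : V) : daisySet G r {x} = interval G r x := by
  simp [daisySet]

section HammingGraph

variable {ι : Type*} {k k' : ι → ℕ}

lemma hammingGraph_adj_update [DecidableEq ι] {u : ∀ i, Fin (k i)} {i : ι} {a : Fin (k i)}
    (h : u i ≠ a) : (hammingGraph k).Adj u (Function.update u i a) := by
  refine ⟨i, by simpa using h, fun j hj => ?_⟩
  by_contra hji
  exact hj (Function.update_of_ne hji a u).symm

variable [Fintype ι]

lemma hammingDist_update_add_one [DecidableEq ι] {u v : ∀ i, Fin (k i)} {i : ι}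
    (h : u i ≠ v i) : hammingDist (Function.update u i (v i)) v + 1 = hammingDist u v := by
  have hfilter : ({j | Function.update u i (v i) j ≠ v j} : Finset ι) =
      ({j | u j ≠ v j} : Finset ι).erase i := by
    ext j
    by_cases hj : j = i
    · subst hj; simp
    · simp [hj]
  rw [hammingDist, hfilter, Finset.card_erase_add_one (by simpa using h), hammingDist]

lemma hammingDist_le_one_of_adj {u v : ∀ i, Fin (k i)} (h : (hammingGraph k).Adj u v) :
    hammingDist u v ≤ 1 := by
  obtain ⟨i, -, hi⟩ := h
  exact Finset.card_le_one.2 fun a ha b hb =>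
    (hi a (Finset.mem_filter.1 ha).2).trans (hi b (Finset.mem_filter.1 hb).2).symm

lemma hammingDist_le_length {u v : ∀ i, Fin (k i)} (p : (hammingGraph k).Walk u v) :
    hammingDist u v ≤ p.length := by
  induction p with
  | nil => simp
  | cons h p ih =>
    calc _ ≤ hammingDist _ _ + hammingDist _ _ := hammingDist_triangle _ _ _
      _ ≤ 1 + p.length := add_le_add (hammingDist_le_one_of_adj h) ih
      _ = _ := by rw [Walk.length_cons, add_comm]

lemma exists_walk_length_eq_hammingDist (u v : ∀ i, Fin (k i)) :
    ∃ p : (hammingGraph k).Walk u v, p.length = hammingDist u v := by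
  classical
  induction hm : hammingDist u v generalizing u with
  | zero =>
    obtain rfl := hammingDist_eq_zero.1 hm
    exact ⟨Walk.nil, rfl⟩
  | succ m ih =>
    obtain ⟨i, hi⟩ : ∃ i, u i ≠ v i := Function.ne_iff.1 (hammingDist_ne_zero.1 (by omega))
    have hstep := hammingDist_update_add_one hi
    obtain ⟨p, hp⟩ := ih (Function.update u i (v i)) (by omega)
    exact ⟨Walk.cons (hammingGraph_adj_update hi) p, by simp [hp]⟩

theorem hammingGraph_dist (u v : ∀ i, Fin (k i)) :
    (hammingGraph k).dist u v = hammingDist u v := by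
  obtain ⟨p, hp⟩ := exists_walk_length_eq_hammingDist u v
  refine le_antisymm (hp ▸ dist_le p) ?_
  obtain ⟨q, hq⟩ := p.reachable.exists_walk_length_eq_dist
  exact hq ▸ hammingDist_le_length q

theorem mem_interval_hammingGraph {r x z : ∀ i, Fin (k i)} :
    z ∈ interval (hammingGraph k) r x ↔ ∀ i, z i = r i ∨ z i = x i := by
  have hle : ∀ i ∈ Finset.univ, (if r i ≠ x i then 1 else 0 : ℕ) ≤
      (if r i ≠ z i then 1 else 0) + if z i ≠ x i then 1 else 0 := by
    intro i _
    split_ifs <;> grind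
  have heq : ∀ i, ((if r i ≠ x i then 1 else 0 : ℕ) =
      (if r i ≠ z i then 1 else 0) + if z i ≠ x i then 1 else 0) ↔ z i = r i ∨ z i = x i := by
    intro i
    split_ifs <;> grind
  simp only [interval, Set.mem_ofPred_eq, hammingGraph_dist, hammingDist, Finset.card_filter]
  rw [← Finset.sum_add_distrib, eq_comm, Finset.sum_eq_sum_iff_of_le hle]
  simpa only [Finset.mem_univ, true_implies] using forall_congr' heq

def induceIsoOfNeIff {S : Set (∀ i, Fin (k i))} {T : Set (∀ i, Fin (k' i))} (e : S ≃ T)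
    (he : ∀ a b i, (e a).1 i ≠ (e b).1 i ↔ a.1 i ≠ b.1 i) :
    (hammingGraph k).induce S ≃g (hammingGraph k').induce T where
  toEquiv := e
  map_rel_iff' {a b} := existsUnique_congr (he a b)

def intervalIsoOfNeIff {r x : ∀ i, Fin (k i)} {r' x' : ∀ i, Fin (k' i)}
    (h : ∀ i, r i ≠ x i ↔ r' i ≠ x' i) :
    (hammingGraph k).induce (interval (hammingGraph k) r x) ≃g
      (hammingGraph k').induce (interval (hammingGraph k') r' x') :=
  induceIsoOfNeIff
    { toFun := fun z => ⟨fun i => if z.1 i = r i then r' i else x' i,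
        mem_interval_hammingGraph.2 fun i => by split_ifs <;> simp⟩
      invFun := fun z => ⟨fun i => if z.1 i = r' i then r i else x i,
        mem_interval_hammingGraph.2 fun i => by split_ifs <;> simp⟩
      left_inv := fun z => Subtype.ext <| funext fun i =>
        ite_ite_eq_of_eq_or_eq (mem_interval_hammingGraph.1 z.2 i) (h i)
      right_inv := fun z => Subtype.ext <| funext fun i =>
        ite_ite_eq_of_eq_or_eq (mem_interval_hammingGraph.1 z.2 i) (h i).symm }
    fun a b i => ite_ne_ite_iff_of_eq_or_eq (mem_interval_hammingGraph.1 a.2 i)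
      (mem_interval_hammingGraph.1 b.2 i) (h i)

end HammingGraph

/-- Let `H = H_{k_1,…,k_n}` be a Hamming graph with root `0^n` and let
`G = H_{0^n}({x})` be the daisy graph of `H` generated by a single vertex `x`. Then `G` is
isomorphic to the daisy cube `Q_n({y})`, where `y i = min (x i) 1`. -/
theorem daisy_singleton_iso_daisyCube
    (n : ℕ) (k : Fin n → ℕ) (hk : ∀ i, 0 < k i) (x : ∀ i, Fin (k i)) :
    Nonempty
      (((hammingGraph k).induce
          (daisySet (hammingGraph k) (hroot k hk) {x})) ≃g
        ((hammingGraph (fun _ : Fin n => 2)).induce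
          (daisySet (hammingGraph (fun _ : Fin n => 2))
            (hroot (fun _ : Fin n => 2) (fun _ => two_pos))
            {fun i => if x i = ⟨0, hk i⟩ then (0 : Fin 2) else 1}))) := by
  rw [daisySet_singleton, daisySet_singleton]
  refine ⟨intervalIsoOfNeIff fun i => ?_⟩
  by_cases hx : x i = ⟨0, hk i⟩ <;> simp [hroot, hx, eq_comm]

end Daisy
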